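/- In the two-knapsack setting, assume additionally that ∑_{i=1}^{n−1} w_i u_i + (θ_n − 1)·w_n ≥ d and that γ_n = θ_n − 1. Then K^≤ ∩ K^≥ = {x ∈ K^≤ : x_n = θ_n} ∪ {x ∈ K^≥ : x_n = θ_n − 1}. -/

import Mathlib

/-!
Since `n` is the top index, the greedy solution takes `θₙ = uₙ`, and every `x ∈ K^≥` satisfies
`γₙ ≤ xₙ`: the weight `wₙ (uₙ - xₙ)` missing from `∑ wᵢ uᵢ` is at most `∑ wᵢ uᵢ - d`. So on
`K^≤ ∩ K^≥` the last coordinate is `θₙ` or `θₙ - 1`. Conversely, superincreasingness makes the last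
coordinate dominate both constraints: `xₙ = uₙ - 1` already forces `∑ aᵢ xᵢ ≤ aₙ uₙ ≤ b`, and
`γₙ < uₙ` means `wₙ ≤ ∑ wᵢ uᵢ - d`, whence `d ≤ wₙ uₙ`, so `xₙ = uₙ` forces `x ∈ K^≥`.
-/

open Finset

lemma sum_Iio_mul_le_of_superincreasing {n : ℕ} {a u : Fin n → ℤ} (ha : ∀ i, 0 ≤ a i)
    (hsi : ∀ i j : Fin n, (j : ℕ) = (i : ℕ) + 1 → ∑ k ∈ Iic i, a k * u k ≤ a j) (j : Fin n) :
    ∑ k ∈ Iio j, a k * u k ≤ a j := by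
  rcases j with ⟨_ | j, hj⟩
  · have hIio : Iio (⟨0, hj⟩ : Fin n) = ∅ :=
      IsMin.finsetIio_eq fun k _ => Fin.le_def.2 k.val.zero_le
    simpa [hIio] using ha _
  · have hIio : Iio (⟨j + 1, hj⟩ : Fin n) = Iic ⟨j, by omega⟩ := by
      ext k
      simp only [mem_Iio, mem_Iic, Fin.lt_def, Fin.le_def]
      omega
    exact hIio ▸ hsi _ _ rfl

lemma sum_eq_sum_Iio_add_of_isTop {ι M : Type*} [Fintype ι] [LinearOrder ι]
    [LocallyFiniteOrderBot ι] [AddCommMonoid M] {m : ι} (hm : IsTop m) (f : ι → M) :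
    ∑ i, f i = ∑ i ∈ Iio m, f i + f m := by
  have huniv : (univ : Finset ι) = insert m (Iio m) := by
    ext i
    simpa using hm i
  rw [huniv, sum_insert (by simp), add_comm]

lemma mul_sub_le_sum_mul_sub_sum_mul {ι : Type*} [Fintype ι] {w u x : ι → ℤ}
    (hw : ∀ i, 0 ≤ w i) (hx : ∀ i, x i ≤ u i) (i : ι) :
    w i * (u i - x i) ≤ ∑ k, w k * u k - ∑ k, w k * x k := by
  rw [← sum_sub_distrib]
  simp_rw [← mul_sub]
  exact single_le_sum (fun k _ => mul_nonneg (hw k) (sub_nonneg.2 (hx k))) (mem_univ i)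

lemma sum_mul_le_of_lt_of_isTop {ι : Type*} [Fintype ι] [LinearOrder ι]
    [LocallyFiniteOrderBot ι] {a u x : ι → ℤ} {m : ι} (hm : IsTop m) (ha : ∀ i, 0 ≤ a i)
    (hsi : ∑ k ∈ Iio m, a k * u k ≤ a m) (hx : ∀ i, x i ≤ u i) (hxm : x m < u m) :
    ∑ i, a i * x i ≤ a m * u m := by
  have hlow : ∑ k ∈ Iio m, a k * x k ≤ ∑ k ∈ Iio m, a k * u k :=
    sum_le_sum fun k _ => mul_le_mul_of_nonneg_left (hx k) (ha k)
  have htop : a m * x m ≤ a m * (u m - 1) :=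
    mul_le_mul_of_nonneg_left (Int.le_sub_one_of_lt hxm) (ha m)
  rw [sum_eq_sum_Iio_add_of_isTop hm]
  linarith

section TopIndex

variable {ι : Type*} [LinearOrder ι] [LocallyFiniteOrderTop ι] {m : ι}

lemma greedy_eq_of_isTop {a u θ : ι → ℤ} {b : ℤ} (hm : IsTop m)
    (hθ : θ m = min (u m) ((b - ∑ k ∈ Ioi m, a k * θ k).fdiv (a m)))
    (ha : 0 < a m) (hub : a m * u m ≤ b) : θ m = u m := by
  rw [hθ, hm.isMax.finsetIoi_eq, sum_empty, sub_zero, Int.fdiv_eq_ediv_of_nonneg _ ha.le,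
    min_eq_left ((Int.le_ediv_iff_mul_le ha).2 (by linarith))]

lemma minPacking_le_of_isTop [Fintype ι] {w u γ x : ι → ℤ} {d : ℤ} (hm : IsTop m)
    (hγ : γ m = u m - min (u m)
      ((∑ k, w k * u k - d - ∑ k ∈ Ioi m, w k * (u k - γ k)).fdiv (w m)))
    (hw : ∀ i, 0 ≤ w i) (hwm : 0 < w m) (hx : ∀ i, 0 ≤ x i ∧ x i ≤ u i)
    (hxd : d ≤ ∑ i, w i * x i) : γ m ≤ x m := by
  have hmissing := mul_sub_le_sum_mul_sub_sum_mul hw (fun i => (hx i).2) m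
  rw [hγ, hm.isMax.finsetIoi_eq, sum_empty, sub_zero, Int.fdiv_eq_ediv_of_nonneg _ hwm.le,
    sub_le_comm]
  refine le_min (by linarith [(hx m).1]) ((Int.le_ediv_iff_mul_le hwm).2 ?_)
  linarith

lemma le_mul_of_minPacking_lt_of_isTop [Fintype ι] [LocallyFiniteOrderBot ι]
    {w u γ : ι → ℤ} {d : ℤ} (hm : IsTop m)
    (hγ : γ m = u m - min (u m)
      ((∑ k, w k * u k - d - ∑ k ∈ Ioi m, w k * (u k - γ k)).fdiv (w m)))
    (hwm : 0 < w m) (hsi : ∑ k ∈ Iio m, w k * u k ≤ w m) (hlt : γ m < u m) :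
    d ≤ w m * u m := by
  rw [hγ, hm.isMax.finsetIoi_eq, sum_empty, sub_zero, Int.fdiv_eq_ediv_of_nonneg _ hwm.le,
    sub_lt_self_iff, lt_min_iff] at hlt
  have hslack := (Int.le_ediv_iff_mul_le hwm).1 (Int.add_one_le_of_lt hlt.2)
  rw [sum_eq_sum_Iio_add_of_isTop hm] at hslack
  linarith

end TopIndex

theorem stmt_15_general {n : ℕ}
    (a w u : Fin n → ℤ)
    (ha : ∀ i, 0 < a i) (hw : ∀ i, 0 < w i)
    (hsia : ∀ i j : Fin n, (j : ℕ) = (i : ℕ) + 1 →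
      ∑ k ∈ Finset.Iic i, a k * u k ≤ a j)
    (hsiw : ∀ i j : Fin n, (j : ℕ) = (i : ℕ) + 1 →
      ∑ k ∈ Finset.Iic i, w k * u k ≤ w j)
    (b d : ℤ)
    (hub : ∀ i, a i * u i ≤ b)
    (θ : Fin n → ℤ)
    (hθ : ∀ i : Fin n,
      θ i = min (u i) ((b - ∑ k ∈ Finset.Ioi i, a k * θ k).fdiv (a i)))
    (γ : Fin n → ℤ)
    (hγ : ∀ i : Fin n, γ i = u i - min (u i)
      (((∑ k, w k * u k) - d - ∑ k ∈ Finset.Ioi i, w k * (u k - γ k)).fdiv (w i)))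
    (lst : Fin n) (hlst : (lst : ℕ) = n - 1)
    (h2 : γ lst = θ lst - 1) :
    {x : Fin n → ℤ | (∀ i, 0 ≤ x i ∧ x i ≤ u i) ∧
        ∑ i, a i * x i ≤ b ∧ d ≤ ∑ i, w i * x i} =
      {x : Fin n → ℤ | ((∀ i, 0 ≤ x i ∧ x i ≤ u i) ∧ ∑ i, a i * x i ≤ b) ∧
          x lst = θ lst} ∪
        {x : Fin n → ℤ | ((∀ i, 0 ≤ x i ∧ x i ≤ u i) ∧ d ≤ ∑ i, w i * x i) ∧
          x lst = θ lst - 1} := by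
  have hm : IsTop lst := fun j => Fin.le_def.2 (by omega)
  have hw0 : ∀ i, 0 ≤ w i := fun i => (hw i).le
  rw [greedy_eq_of_isTop hm (hθ lst) (ha lst) (hub lst)] at h2 ⊢
  ext x
  simp only [Set.mem_ofPred_eq, Set.mem_union]
  constructor
  · rintro ⟨hx, hxa, hxw⟩
    have hγx := minPacking_le_of_isTop hm (hγ lst) hw0 (hw lst) hx hxw
    rcases (hx lst).2.eq_or_lt with h | h
    · exact Or.inl ⟨⟨hx, hxa⟩, h⟩
    · exact Or.inr ⟨⟨hx, hxw⟩, by omega⟩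
  · rintro (⟨⟨hx, hxa⟩, hxm⟩ | ⟨⟨hx, hxw⟩, hxm⟩)
    · refine ⟨hx, hxa, ?_⟩
      calc d ≤ w lst * u lst := le_mul_of_minPacking_lt_of_isTop hm (hγ lst) (hw lst)
              (sum_Iio_mul_le_of_superincreasing hw0 hsiw lst) (by omega)
        _ = w lst * x lst := by rw [hxm]
        _ ≤ ∑ i, w i * x i :=
          single_le_sum (fun i _ => mul_nonneg (hw0 i) (hx i).1) (mem_univ lst)
    · refine ⟨hx, ?_, hxw⟩
      exact (sum_mul_le_of_lt_of_isTop hm (fun i => (ha i).le)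
        (sum_Iio_mul_le_of_superincreasing (fun i => (ha i).le) hsia lst)
        (fun i => (hx i).2) (by omega)).trans (hub lst)

/-- in the two-knapsack setting with `γ_n = θ_n − 1`, the intersection
`K^≤ ∩ K^≥` decomposes as the union of `{x ∈ K^≤ : x_n = θ_n}` and
`{x ∈ K^≥ : x_n = θ_n − 1}`.  Here `lst` denotes the last index (index `n`). -/
theorem stmt_15 {n : ℕ} (hn : 1 ≤ n)
    (a w u : Fin n → ℤ)
    (ha : ∀ i, 0 < a i) (hw : ∀ i, 0 < w i) (hu : ∀ i, 1 ≤ u i)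
    (hsia : ∀ i j : Fin n, (j : ℕ) = (i : ℕ) + 1 →
      ∑ k ∈ Finset.Iic i, a k * u k ≤ a j)
    (hsiw : ∀ i j : Fin n, (j : ℕ) = (i : ℕ) + 1 →
      ∑ k ∈ Finset.Iic i, w k * u k ≤ w j)
    (b d : ℤ) (hb : 0 < b) (hd : 0 < d)
    (hub : ∀ i, a i * u i ≤ b) (hdle : d ≤ ∑ i, w i * u i)
    (θ : Fin n → ℤ)
    (hθ : ∀ i : Fin n,
      θ i = min (u i) ((b - ∑ k ∈ Finset.Ioi i, a k * θ k).fdiv (a i)))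
    (γ : Fin n → ℤ)
    (hγ : ∀ i : Fin n, γ i = u i - min (u i)
      (((∑ k, w k * u k) - d - ∑ k ∈ Finset.Ioi i, w k * (u k - γ k)).fdiv (w i)))
    (lst : Fin n) (hlst : (lst : ℕ) = n - 1)
    (h1 : d ≤ ∑ i ∈ Finset.Iio lst, w i * u i + (θ lst - 1) * w lst)
    (h2 : γ lst = θ lst - 1) :
    {x : Fin n → ℤ | (∀ i, 0 ≤ x i ∧ x i ≤ u i) ∧
        ∑ i, a i * x i ≤ b ∧ d ≤ ∑ i, w i * x i} =
      {x : Fin n → ℤ | ((∀ i, 0 ≤ x i ∧ x i ≤ u i) ∧ ∑ i, a i * x i ≤ b) ∧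
          x lst = θ lst} ∪
        {x : Fin n → ℤ | ((∀ i, 0 ≤ x i ∧ x i ≤ u i) ∧ d ≤ ∑ i, w i * x i) ∧
          x lst = θ lst - 1} :=
  stmt_15_general a w u ha hw hsia hsiw b d hub θ hθ γ hγ lst hlst h2
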